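/- arXiv:0804.3581 — 6 statements merged into one kernel-verified Lean document; each statement's English description precedes it below -/
import Mathlib

section
/- Let G be a group with normal subgroups L, M, N. Then the quotient group (LM ∩ MN)/(M(L∩N)) is symmetric in L, M, N: for every permutation (L',M',N') of the triple (L,M,N) there is a group isomorphism (LM ∩ MN)/(M(L∩N)) ≅ (L'M' ∩ M'N')/(M'(L'∩N')). (Here LM denotes the join of the normal subgroups L and M, and M(L∩N) is a normal subgroup of G contained in LM ∩ MN, so the quotient is well defined.) -/
/-- The quotient group `(LM ∩ MN)/(M(L∩N))` associated to an ordered triple `(L, M, N)`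
of normal subgroups of `G`.  Here `LM` is the join `L ⊔ M` and `M(L∩N)` is the join
`M ⊔ (L ⊓ N)`, a normal subgroup of `G` contained in `LM ∩ MN`. -/
abbrev tripleQuot {G : Type*} [Group G] (L M N : Subgroup G) [M.Normal] [(L ⊓ N).Normal] :=
  ((L ⊔ M) ⊓ (M ⊔ N) : Subgroup G) ⧸
    ((M ⊔ (L ⊓ N)).subgroupOf ((L ⊔ M) ⊓ (M ⊔ N)))

namespace TQ
variable {G : Type*} [Group G]
variable {G : Type*} [Group G]

/-- Modular law for a normal subgroup. -/
theorem modular_law (A B C : Subgroup G) [A.Normal] (h : A ≤ C) :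
    A ⊔ (B ⊓ C) = (A ⊔ B) ⊓ C := by
  apply SetLike.coe_injective
  rw [Subgroup.coe_inf, Subgroup.normal_mul, Subgroup.normal_mul,
    Subgroup.mul_inf_assoc A B C h]

abbrev uu (A B C : Subgroup G) : Subgroup G := (A ⊔ B) ⊓ (B ⊔ C) ⊓ (C ⊔ A)
abbrev vv (A B C : Subgroup G) : Subgroup G := (A ⊓ B) ⊔ (B ⊓ C) ⊔ (C ⊓ A)
abbrev aa (A B C : Subgroup G) : Subgroup G := vv A B C ⊔ (B ⊓ uu A B C)

theorem uu_rotate (A B C : Subgroup G) : uu A B C = uu B C A := by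
  ext x; simp only [Subgroup.mem_inf]; tauto

theorem uu_swap (A B C : Subgroup G) : uu A B C = uu C B A := by
  unfold uu
  rw [sup_comm C B, sup_comm B A, sup_comm A C]
  ext x; simp only [Subgroup.mem_inf]; tauto

theorem vv_rotate (A B C : Subgroup G) : vv A B C = vv B C A := by
  unfold vv
  simp [sup_comm, sup_left_comm, sup_assoc]

theorem vv_swap (A B C : Subgroup G) : vv A B C = vv C B A := by
  unfold vv
  rw [inf_comm C B, inf_comm B A, inf_comm A C]
  simp [sup_comm, sup_left_comm, sup_assoc]

theorem vv_le_uu (A B C : Subgroup G) : vv A B C ≤ uu A B C := by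
  refine sup_le (sup_le ?_ ?_) ?_
  · exact le_inf (le_inf (inf_le_left.trans le_sup_left) (inf_le_right.trans le_sup_left))
      (inf_le_left.trans le_sup_right)
  · exact le_inf (le_inf (inf_le_left.trans le_sup_right) (inf_le_left.trans le_sup_left))
      (inf_le_right.trans le_sup_left)
  · exact le_inf (le_inf (inf_le_right.trans le_sup_left) (inf_le_left.trans le_sup_right))
      (inf_le_left.trans le_sup_left)

theorem A_inf_uu (A B C : Subgroup G) : A ⊓ uu A B C = A ⊓ (B ⊔ C) :=
  le_antisymm (inf_le_inf_left A (inf_le_left.trans inf_le_right))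
    (le_inf inf_le_left (le_inf (le_inf (inf_le_left.trans le_sup_left) inf_le_right)
      (inf_le_left.trans le_sup_right)))

theorem B_inf_uu (A B C : Subgroup G) : B ⊓ uu A B C = B ⊓ (C ⊔ A) :=
  le_antisymm (inf_le_inf_left B inf_le_right)
    (le_inf inf_le_left (le_inf (le_inf (inf_le_left.trans le_sup_right)
      (inf_le_left.trans le_sup_left)) inf_le_right))

theorem AC_le_uu (A B C : Subgroup G) : A ⊓ C ≤ uu A B C :=
  le_inf (le_inf (inf_le_left.trans le_sup_left) (inf_le_right.trans le_sup_right))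
    (inf_le_right.trans le_sup_left)

theorem sup_B_uu (A B C : Subgroup G) [B.Normal] :
    B ⊔ uu A B C = (A ⊔ B) ⊓ (B ⊔ C) := by
  have h : uu A B C = (C ⊔ A) ⊓ ((A ⊔ B) ⊓ (B ⊔ C)) := inf_comm _ _
  rw [h, modular_law B (C ⊔ A) ((A ⊔ B) ⊓ (B ⊔ C))
    (le_inf le_sup_right le_sup_left)]
  exact inf_eq_right.mpr
    (inf_le_left.trans (sup_le (le_sup_right.trans le_sup_right) le_sup_left))

theorem kk_sup_uu (A B C : Subgroup G) [B.Normal] :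
    (B ⊔ (A ⊓ C)) ⊔ uu A B C = (A ⊔ B) ⊓ (B ⊔ C) := by
  rw [sup_assoc, sup_eq_right.mpr (AC_le_uu A B C), sup_B_uu]

theorem aa_eq (A B C : Subgroup G) : aa A B C = (A ⊓ C) ⊔ (B ⊓ (C ⊔ A)) := by
  rw [show aa A B C = vv A B C ⊔ (B ⊓ uu A B C) from rfl, B_inf_uu]
  apply le_antisymm
  · refine sup_le (sup_le (sup_le ?_ ?_) ?_) le_sup_right
    · exact le_sup_right.trans' (le_inf inf_le_right (inf_le_left.trans le_sup_right))
    · exact le_sup_right.trans' (le_inf inf_le_left (inf_le_right.trans le_sup_left))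
    · exact le_sup_left.trans' (le_of_eq (inf_comm C A))
  · exact sup_le ((le_of_eq (inf_comm A C)).trans (le_sup_right.trans le_sup_left))
      le_sup_right

theorem kk_inf_uu (A B C : Subgroup G) [A.Normal] [C.Normal] :
    (B ⊔ (A ⊓ C)) ⊓ uu A B C = aa A B C := by
  have h1 : B ⊔ (A ⊓ C) ≤ (A ⊔ B) ⊓ (B ⊔ C) :=
    sup_le (le_inf le_sup_right le_sup_left)
      (le_inf (inf_le_left.trans le_sup_left) (inf_le_right.trans le_sup_right))
  have h2 : (B ⊔ (A ⊓ C)) ⊓ uu A B C = (B ⊔ (A ⊓ C)) ⊓ (C ⊔ A) := by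
    rw [show uu A B C = ((A ⊔ B) ⊓ (B ⊔ C)) ⊓ (C ⊔ A) from rfl, ← inf_assoc,
      inf_eq_left.mpr h1]
  rw [h2, sup_comm B (A ⊓ C),
    ← modular_law (A ⊓ C) B (C ⊔ A) (inf_le_right.trans le_sup_left), aa_eq]

theorem pair_sup (A B C : Subgroup G) [A.Normal] [B.Normal] [C.Normal] :
    (vv A B C ⊔ (A ⊓ uu A B C)) ⊔ aa A B C = uu A B C := by
  have key : (A ⊓ uu A B C) ⊔ (B ⊓ uu A B C) = uu A B C := by
    rw [modular_law (A ⊓ uu A B C) B (uu A B C) inf_le_right, A_inf_uu,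
      sup_comm (A ⊓ (B ⊔ C)) B, modular_law B A (B ⊔ C) le_sup_left]
    exact inf_eq_right.mpr (le_inf
      ((inf_le_left.trans inf_le_left).trans (le_of_eq (sup_comm A B)))
      (inf_le_left.trans inf_le_right))
  rw [show aa A B C = vv A B C ⊔ (B ⊓ uu A B C) from rfl, sup_sup_sup_comm, sup_idem, key]
  exact sup_eq_right.mpr (vv_le_uu A B C)

theorem pair_inf (A B C : Subgroup G) [A.Normal] [B.Normal] [C.Normal] :
    (vv A B C ⊔ (A ⊓ uu A B C)) ⊓ aa A B C = vv A B C := by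
  rw [← modular_law (vv A B C) (A ⊓ uu A B C) (aa A B C) le_sup_left]
  apply sup_eq_left.mpr
  have hb : (A ⊓ uu A B C) ⊓ aa A B C ≤ A ⊓ ((A ⊓ C) ⊔ B) := by
    rw [aa_eq, modular_law (A ⊓ C) B (C ⊔ A) (inf_le_right.trans le_sup_left)]
    exact le_inf (inf_le_left.trans inf_le_left) (inf_le_right.trans inf_le_left)
  refine hb.trans ?_
  rw [inf_comm A (((A ⊓ C) ⊔ B)), ← modular_law (A ⊓ C) B A inf_le_left]
  exact sup_le ((le_of_eq (inf_comm A C)).trans le_sup_right)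
    ((le_of_eq (inf_comm B A)).trans (le_sup_left.trans le_sup_left))


/-- congruence of quotients of subgroups -/
noncomputable def quotCongr {H₁ H₂ K₁ K₂ : Subgroup G} [K₁.Normal] [K₂.Normal]
    (hH : H₁ = H₂) (hK : K₁ = K₂) :
    H₁ ⧸ K₁.subgroupOf H₁ ≃* H₂ ⧸ K₂.subgroupOf H₂ := by
  subst hH
  exact QuotientGroup.quotientMulEquivOfEq (by rw [hK])

noncomputable def mainEquiv (A B C : Subgroup G) [A.Normal] [B.Normal] [C.Normal] :
    (((A ⊔ B) ⊓ (B ⊔ C) : Subgroup G) ⧸ ((B ⊔ (A ⊓ C)).subgroupOf ((A ⊔ B) ⊓ (B ⊔ C)))) ≃*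
      (uu A B C ⧸ (aa A B C).subgroupOf (uu A B C)) :=
  let e1 : uu A B C ⧸ (aa A B C).subgroupOf (uu A B C) ≃*
      uu A B C ⧸ (B ⊔ (A ⊓ C)).subgroupOf (uu A B C) :=
    QuotientGroup.quotientMulEquivOfEq
      (by rw [← kk_inf_uu A B C, Subgroup.inf_subgroupOf_right])
  let e2 := QuotientGroup.quotientInfEquivProdNormalQuotient (uu A B C) (B ⊔ (A ⊓ C))
  let e3 := quotCongr (K₁ := B ⊔ (A ⊓ C)) (K₂ := B ⊔ (A ⊓ C)) (kk_sup_uu A B C ▸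
    (sup_comm (uu A B C) (B ⊔ (A ⊓ C)) : uu A B C ⊔ (B ⊔ (A ⊓ C)) = _)) rfl
  ((e1.trans e2).trans e3).symm

noncomputable def sideEquiv (A B C : Subgroup G) [A.Normal] [B.Normal] [C.Normal] :
    (uu A B C ⧸ (aa A B C).subgroupOf (uu A B C)) ≃*
      ((vv A B C ⊔ (A ⊓ uu A B C) : Subgroup G) ⧸
        (vv A B C).subgroupOf (vv A B C ⊔ (A ⊓ uu A B C))) :=
  let P : Subgroup G := vv A B C ⊔ (A ⊓ uu A B C)
  let e1 : P ⧸ (vv A B C).subgroupOf P ≃* P ⧸ (aa A B C).subgroupOf P :=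
    QuotientGroup.quotientMulEquivOfEq
      (by rw [← pair_inf A B C, inf_comm, Subgroup.inf_subgroupOf_right])
  let e2 := QuotientGroup.quotientInfEquivProdNormalQuotient P (aa A B C)
  let e3 := quotCongr (K₁ := aa A B C) (K₂ := aa A B C) (pair_sup A B C) rfl
  ((e1.trans e2).trans e3).symm

/-- switch the middle subgroup from `B` to `A`, pivoting through `C`. -/
noncomputable def switchEquiv (A B C : Subgroup G) [A.Normal] [B.Normal] [C.Normal] :
    (uu A B C ⧸ (vv A B C ⊔ (B ⊓ uu A B C)).subgroupOf (uu A B C)) ≃*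
      (uu A B C ⧸ (vv A B C ⊔ (A ⊓ uu A B C)).subgroupOf (uu A B C)) :=
  have h1 : uu A B C = uu C B A := uu_swap A B C
  have hv1 : vv A B C = vv C B A := vv_swap A B C
  have h2 : uu A B C = uu C A B := (uu_rotate A B C).trans (uu_rotate B C A)
  have hv2 : vv A B C = vv C A B := (vv_rotate A B C).trans (vv_rotate B C A)
  let c1 := quotCongr (G := G) (K₁ := vv A B C ⊔ (B ⊓ uu A B C))
    (K₂ := vv C B A ⊔ (B ⊓ uu C B A)) h1 (by rw [← h1, ← hv1])
  let s1 := sideEquiv C B A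
  let c2 := quotCongr (G := G) (K₁ := vv C B A) (K₂ := vv C A B)
    (show (vv C B A ⊔ (C ⊓ uu C B A) : Subgroup G) = vv C A B ⊔ (C ⊓ uu C A B) by
      rw [← hv1, ← h1, ← hv2, ← h2]) (by rw [← hv1, ← hv2])
  let s2 := sideEquiv C A B
  let c3 := quotCongr (G := G) (K₁ := vv C A B ⊔ (A ⊓ uu C A B))
    (K₂ := vv A B C ⊔ (A ⊓ uu A B C)) h2.symm (by rw [← h2, ← hv2])
  (((c1.trans s1).trans c2).trans s2.symm).trans c3

/-- switch the middle subgroup from `B` to `C`. -/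
noncomputable def switchToC (A B C : Subgroup G) [A.Normal] [B.Normal] [C.Normal] :
    (uu A B C ⧸ (vv A B C ⊔ (B ⊓ uu A B C)).subgroupOf (uu A B C)) ≃*
      (uu A B C ⧸ (vv A B C ⊔ (C ⊓ uu A B C)).subgroupOf (uu A B C)) :=
  have h1 : uu A B C = uu C B A := uu_swap A B C
  have hv1 : vv A B C = vv C B A := vv_swap A B C
  let c1 := quotCongr (G := G) (K₁ := vv A B C ⊔ (B ⊓ uu A B C))
    (K₂ := vv C B A ⊔ (B ⊓ uu C B A)) h1 (by rw [← h1, ← hv1])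
  let c2 := quotCongr (G := G) (K₁ := vv C B A ⊔ (C ⊓ uu C B A))
    (K₂ := vv A B C ⊔ (C ⊓ uu A B C)) h1.symm (by rw [← h1, ← hv1])
  (c1.trans (switchEquiv C B A)).trans c2


/-- general step: if `uu/vv` of the permuted triple agree with those of `(A,B,C)` and the
middle quotients are equivalent, then the triple quotients are equivalent. -/
noncomputable def genEquiv (A B C X Y Z : Subgroup G)
    [A.Normal] [B.Normal] [C.Normal] [X.Normal] [Y.Normal] [Z.Normal]
    (hu : uu X Y Z = uu A B C) (hv : vv X Y Z = vv A B C)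
    (e : (uu A B C ⧸ (vv A B C ⊔ (B ⊓ uu A B C)).subgroupOf (uu A B C)) ≃*
         (uu A B C ⧸ (vv A B C ⊔ (Y ⊓ uu A B C)).subgroupOf (uu A B C))) :
    tripleQuot A B C ≃* tripleQuot X Y Z :=
  let c := quotCongr (G := G) (K₁ := vv A B C ⊔ (Y ⊓ uu A B C))
    (K₂ := vv X Y Z ⊔ (Y ⊓ uu X Y Z)) hu.symm (by rw [hu, hv])
  ((mainEquiv A B C).trans (e.trans c)).trans (mainEquiv X Y Z).symm

end TQ

set_option maxHeartbeats 1000000 in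
/-- for a group `G` with normal subgroups `L, M, N`, the quotient group
`(LM ∩ MN)/(M(L∩N))` is symmetric in `L, M, N`: for every permutation `(L', M', N')`
of the triple `(L, M, N)` there is a group isomorphism
`(LM ∩ MN)/(M(L∩N)) ≅ (L'M' ∩ M'N')/(M'(L'∩N'))`. -/
theorem tripleQuot_symmetric {G : Type*} [Group G] (L M N L' M' N' : Subgroup G)
    [L.Normal] [M.Normal] [N.Normal] [L'.Normal] [M'.Normal] [N'.Normal]
    (h : ∃ σ : Equiv.Perm (Fin 3), (![L', M', N'] : Fin 3 → Subgroup G) = ![L, M, N] ∘ σ) :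
    Nonempty (tripleQuot L M N ≃* tripleQuot L' M' N') := by
  obtain ⟨σ, hσ⟩ := h
  have e0 : L' = ![L, M, N] (σ 0) := congrFun hσ 0
  have e1 : M' = ![L, M, N] (σ 1) := congrFun hσ 1
  have e2 : N' = ![L, M, N] (σ 2) := congrFun hσ 2
  have tri : ∀ i : Fin 3, i = 0 ∨ i = 1 ∨ i = 2 := by decide
  have ur : ∀ A B C : Subgroup G, TQ.uu A B C = TQ.uu B C A := fun A B C => TQ.uu_rotate A B C
  have us : ∀ A B C : Subgroup G, TQ.uu A B C = TQ.uu C B A := fun A B C => TQ.uu_swap A B C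
  have vr : ∀ A B C : Subgroup G, TQ.vv A B C = TQ.vv B C A := fun A B C => TQ.vv_rotate A B C
  have vs : ∀ A B C : Subgroup G, TQ.vv A B C = TQ.vv C B A := fun A B C => TQ.vv_swap A B C
  rcases tri (σ 0) with h0 | h0 | h0 <;> rcases tri (σ 1) with h1 | h1 | h1 <;>
    rcases tri (σ 2) with h2 | h2 | h2
  all_goals first
    | exact absurd (σ.injective (h0.trans h1.symm)) (by decide)
    | exact absurd (σ.injective (h0.trans h2.symm)) (by decide)
    | exact absurd (σ.injective (h1.trans h2.symm)) (by decide)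
    | (rw [h0] at e0; rw [h1] at e1; rw [h2] at e2;
       simp only [Matrix.cons_val_zero, Matrix.cons_val_one, Matrix.head_cons,
         Matrix.cons_val_two, Matrix.tail_cons] at e0 e1 e2;
       subst L'; subst M'; subst N')
  -- remaining goals: (L',M',N') = (L,M,N), (L,N,M), (M,L,N), (M,N,L), (N,L,M), (N,M,L)
  · exact ⟨MulEquiv.refl _⟩
  · exact ⟨TQ.genEquiv L M N L N M ((ur L N M).trans (us N M L)) ((vr L N M).trans (vs N M L))
      (TQ.switchToC L M N)⟩
  · exact ⟨TQ.genEquiv L M N M L N ((us M L N).trans (ur N L M)) ((vs M L N).trans (vr N L M))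
      (TQ.switchEquiv L M N)⟩
  · exact ⟨TQ.genEquiv L M N M N L ((ur M N L).trans (ur N L M)) ((vr M N L).trans (vr N L M))
      (TQ.switchToC L M N)⟩
  · exact ⟨TQ.genEquiv L M N N L M (ur N L M) (vr N L M) (TQ.switchEquiv L M N)⟩
  · exact ⟨TQ.genEquiv L M N N M L (us N M L) (vs N M L) (MulEquiv.refl _)⟩
end

section
/- Let G be a group and R₁, …, R_{n+1} normal subgroups whose join is all of G (R₁⋯R_{n+1} = G). Then the image of R₁ ∩ ⋯ ∩ R_{n+1} in the quotient G / ∏_{I ⊔ J = {1,…,n+1}} [R_I, R_J] is central; equivalently, [R₁ ∩ ⋯ ∩ R_{n+1}, G] ≤ ∏_{I ⊔ J = {1,…,n+1}} [R_I, R_J]. -/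
/-!
Modulo the normal subgroup `N = ∏_{I ⊔ J} [R_I, R_J]`, the intersection `R₁ ∩ ⋯ ∩ R_{n+1}`
commutes with each `Rⱼ`, because `[⋂ᵢ Rᵢ, Rⱼ] ≤ [R_{{j}ᶜ}, R_{{j}}]` is one of the factors of `N`
(here `n ≥ 1` makes `{j}ᶜ` nonempty). Since the `Rⱼ` generate `G` and the elements commuting with a
given subgroup modulo a normal subgroup form a subgroup, the intersection is central modulo `N`.
-/

/-- The join `∏_{I ⊔ J} [R_I, R_J]` of the commutator subgroups
`[⋂_{i∈I} Rᵢ, ⋂_{j∈J} Rⱼ]` over all pairs `(I, J)` of nonempty disjoint subsets of the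
index set with union everything. -/
def bigCommutatorJoin {G : Type*} [Group G] {ι : Type*} (R : ι → Subgroup G) : Subgroup G :=
  ⨆ I : Set ι, ⨆ J : Set ι,
    ⨆ _ : I.Nonempty ∧ J.Nonempty ∧ Disjoint I J ∧ I ∪ J = Set.univ,
      ⁅⨅ i ∈ I, R i, ⨅ j ∈ J, R j⁆

open scoped commutatorElement

namespace Subgroup

variable {G : Type*} [Group G]

theorem commutator_iSup_le {ι : Sort*} {H N : Subgroup G} [N.Normal] {K : ι → Subgroup G}
    (hK : ∀ i, ⁅H, K i⁆ ≤ N) : ⁅H, ⨆ i, K i⁆ ≤ N := by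
  rw [commutator_le]
  intro h hh g hg
  refine iSup_induction K (C := fun g ↦ ⁅h, g⁆ ∈ N) hg
    (fun i k hk ↦ hK i (commutator_mem_commutator hh hk))
    (by rw [commutatorElement_one_right]; exact N.one_mem) fun a b ha hb ↦ ?_
  rw [commutatorElement_mul_right_eq_mul_conj, mul_assoc ⁅h, a⁆ a, mul_assoc ⁅h, a⁆]
  exact N.mul_mem ha (Normal.conj_mem ‹_› _ hb a)

end Subgroup

section bigCommutatorJoin

variable {G : Type*} [Group G] {ι : Type*} (R : ι → Subgroup G)

theorem commutator_le_bigCommutatorJoin {I J : Set ι} (hI : I.Nonempty) (hJ : J.Nonempty)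
    (hIJ : Disjoint I J) (hunion : I ∪ J = Set.univ) :
    ⁅⨅ i ∈ I, R i, ⨅ j ∈ J, R j⁆ ≤ bigCommutatorJoin R :=
  le_iSup₂_of_le I J <| le_iSup_of_le ⟨hI, hJ, hIJ, hunion⟩ le_rfl

theorem commutator_iInf_le_bigCommutatorJoin [Nontrivial ι] (j : ι) :
    ⁅⨅ i, R i, R j⁆ ≤ bigCommutatorJoin R := by
  have hcompl : ({j}ᶜ : Set ι).Nonempty := (exists_ne j).imp fun _ ↦ id
  refine le_trans (Subgroup.commutator_mono ?_ ?_) <| commutator_le_bigCommutatorJoin R hcompl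
    (Set.singleton_nonempty j) disjoint_compl_left (Set.compl_union_self _)
  · exact le_iInf₂ fun i _ ↦ iInf_le R i
  · simp

theorem bigCommutatorJoin_normal (hR : ∀ i, (R i).Normal) : (bigCommutatorJoin R).Normal := by
  have hbiInf (I : Set ι) : (⨅ i ∈ I, R i).Normal :=
    Subgroup.normal_iInf_normal fun i ↦ Subgroup.normal_iInf_normal fun _ ↦ hR i
  unfold bigCommutatorJoin
  infer_instance

end bigCommutatorJoin

/-- let `G` be a group and `R₁, …, R_{n+1}` (`n ≥ 1`) normal subgroups whose
join is all of `G`.  Then the image of `R₁ ∩ ⋯ ∩ R_{n+1}` in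
`G / ∏_{I ⊔ J = {1,…,n+1}} [R_I, R_J]` is central; equivalently,
`[R₁ ∩ ⋯ ∩ R_{n+1}, G] ≤ ∏_{I ⊔ J = {1,…,n+1}} [R_I, R_J]`. -/
theorem commutator_iInf_top_le_bigCommutatorJoin {G : Type*} [Group G] (n : ℕ) (hn : 1 ≤ n)
    (R : Fin (n + 1) → Subgroup G) (hR : ∀ i, (R i).Normal)
    (hjoin : (⨆ i, R i) = (⊤ : Subgroup G)) :
    ⁅(⨅ i, R i : Subgroup G), (⊤ : Subgroup G)⁆ ≤ bigCommutatorJoin R := by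
  have : Nontrivial (Fin (n + 1)) := Fin.nontrivial_iff_two_le.mpr (by omega)
  have := bigCommutatorJoin_normal R hR
  rw [← hjoin]
  exact Subgroup.commutator_iSup_le (commutator_iInf_le_bigCommutatorJoin R)
end

section
/- Let F be the free group on generators y₀, y₁ and set y₋₁ = (y₀y₁)⁻¹. Then [y₀, y₁] ∉ [[y₋₁, y₀, y₁]]. (This element corresponds to the homotopy class of the Hopf fibration S³ → S², a generator of π₃(S²) ≅ ℤ.) -/
open scoped commutatorElement

/-- The left-normed (left-ordered) commutator `[a, b₁, b₂, …, b_t] = [[…[[a,b₁],b₂]…],b_t]`,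
where `[a,b] = aba⁻¹b⁻¹`. -/
def leftNormedCommutator {G : Type*} [Group G] : G → List G → G
  | a, [] => a
  | a, b :: l => leftNormedCommutator ⁅a, b⁆ l

/-- The letter `(w i)^ε` for a sign `ε = ±1` (coded by a `Bool`). -/
def signedLetter {G : Type*} [Group G] {ι : Type*} (w : ι → G) : ι × Bool → G
  | (i, true) => w i
  | (i, false) => (w i)⁻¹

/-- The set of all left-normed commutators `[z₁^{ε₁}, …, z_t^{ε_t}]` with `εᵢ = ±1`,
`zᵢ ∈ {w i | i : ι}`, in which every letter `w i` occurs at least once. -/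
def fatCommutatorSet {G : Type*} [Group G] {ι : Type*} (w : ι → G) : Set G :=
  { g | ∃ (z : ι × Bool) (l : List (ι × Bool)),
      (∀ i : ι, i ∈ ((z :: l).map Prod.fst)) ∧
      g = leftNormedCommutator (signedLetter w z) (l.map (signedLetter w)) }

/-- `[[w₁, …, w_k]]`: the normal closure of the set of left-normed commutators with
(signed) entries from `{w i}` in which every `w i` appears at least once. -/
def fatCommutator {G : Type*} [Group G] {ι : Type*} (w : ι → G) : Subgroup G :=
  Subgroup.normalClosure (fatCommutatorSet w)

/-- The family of letters `y₋₁, y₀, …, y_{n-1}` in the free group `F` on `y₀, …, y_{n-1}`,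
where `y₋₁ = (y₀ ⋯ y_{n-1})⁻¹`; the index `0 : Fin (n+1)` encodes `y₋₁` and `i+1`
encodes `yᵢ`. -/
def wuLetter (n : ℕ) : Fin (n + 1) → FreeGroup (Fin n) :=
  Fin.cases ((List.ofFn fun i : Fin n => FreeGroup.of i).prod)⁻¹ fun i => FreeGroup.of i

/-!
Every left-normed commutator in which all three letters `y₋₁, y₀, y₁` occur has at least
three entries, so it dies in any group of nilpotency class at most 2. The integer Heisenberg
group is such a group, and the homomorphism sending `y₀, y₁` to its standard generators maps
`[y₀, y₁]` to the nontrivial central generator.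
-/

section LeftNormedCommutator

variable {G H : Type*} [Group G] [Group H]

lemma leftNormedCommutator_one (l : List G) : leftNormedCommutator (1 : G) l = 1 := by
  induction l with
  | nil => rfl
  | cons b l ih => simpa only [leftNormedCommutator, commutatorElement_one_left] using ih

lemma map_leftNormedCommutator (f : G →* H) (a : G) (l : List G) :
    f (leftNormedCommutator a l) = leftNormedCommutator (f a) (l.map f) := by
  induction l generalizing a with
  | nil => rfl
  | cons b l ih => simp only [leftNormedCommutator, List.map_cons, ih, map_commutatorElement]

lemma leftNormedCommutator_eq_one_of_two_le_length (hG : ∀ a b c : G, ⁅⁅a, b⁆, c⁆ = 1)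
    (a : G) {l : List G} (hl : 2 ≤ l.length) : leftNormedCommutator a l = 1 := by
  match l, hl with
  | b :: c :: l, _ => simp only [leftNormedCommutator, hG, leftNormedCommutator_one]

end LeftNormedCommutator

lemma Fintype.card_le_length_of_forall_mem {ι : Type*} [Fintype ι] {l : List ι}
    (hl : ∀ i, i ∈ l) : Fintype.card ι ≤ l.length := by
  classical
  calc Fintype.card ι = (Finset.univ : Finset ι).card := Finset.card_univ.symm
    _ ≤ l.toFinset.card := Finset.card_le_card fun i _ => List.mem_toFinset.2 (hl i)
    _ ≤ l.length := l.toFinset_card_le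

lemma fatCommutator_le_ker {G H ι : Type*} [Group G] [Group H] [Fintype ι]
    (hι : 3 ≤ Fintype.card ι) (w : ι → G) (f : G →* H) (hH : ∀ a b c : H, ⁅⁅a, b⁆, c⁆ = 1) :
    fatCommutator w ≤ f.ker := by
  refine Subgroup.normalClosure_le_normal ?_
  rintro g ⟨z, l, hcover, rfl⟩
  have hlen : 3 ≤ l.length + 1 := by
    simpa only [List.length_map, List.length_cons] using
      hι.trans (Fintype.card_le_length_of_forall_mem hcover)
  rw [SetLike.mem_coe, MonoidHom.mem_ker, map_leftNormedCommutator]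
  exact leftNormedCommutator_eq_one_of_two_le_length hH _ (by simpa using hlen)

/-- `⟨a, b, c⟩` models the unitriangular matrix `[[1, a, c], [0, 1, b], [0, 0, 1]]`. -/
@[ext]
structure Heisenberg where
  a : ℤ
  b : ℤ
  c : ℤ

namespace Heisenberg

instance : Mul Heisenberg := ⟨fun x y => ⟨x.a + y.a, x.b + y.b, x.c + y.c + x.a * y.b⟩⟩
instance : One Heisenberg := ⟨⟨0, 0, 0⟩⟩
instance : Inv Heisenberg := ⟨fun x => ⟨-x.a, -x.b, -x.c + x.a * x.b⟩⟩

lemma mul_def (x y : Heisenberg) : x * y = ⟨x.a + y.a, x.b + y.b, x.c + y.c + x.a * y.b⟩ := rfl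
lemma one_def : (1 : Heisenberg) = ⟨0, 0, 0⟩ := rfl
lemma inv_def (x : Heisenberg) : x⁻¹ = ⟨-x.a, -x.b, -x.c + x.a * x.b⟩ := rfl

instance : Group Heisenberg where
  mul_assoc x y z := by ext <;> simp only [mul_def] <;> ring
  one_mul x := by ext <;> simp only [mul_def, one_def] <;> ring
  mul_one x := by ext <;> simp only [mul_def, one_def] <;> ring
  inv_mul_cancel x := by ext <;> simp only [mul_def, inv_def, one_def] <;> ring

lemma commutatorElement_eq (x y : Heisenberg) : ⁅x, y⁆ = ⟨0, 0, x.a * y.b - x.b * y.a⟩ := by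
  ext <;> simp only [commutatorElement_def, mul_def, inv_def] <;> ring

lemma commutatorElement_commutatorElement (x y z : Heisenberg) : ⁅⁅x, y⁆, z⁆ = 1 := by
  rw [commutatorElement_eq, commutatorElement_eq, one_def]
  simp

end Heisenberg

/-- in the free group `F` on `y₀, y₁`, with `y₋₁ = (y₀y₁)⁻¹`, the commutator
`[y₀, y₁]` does not lie in `[[y₋₁, y₀, y₁]]`.  (It corresponds to the homotopy class of
the Hopf fibration `S³ → S²`, a generator of `π₃(S²) ≅ ℤ`.) -/
theorem hopf_not_mem :
    ⁅(FreeGroup.of 0 : FreeGroup (Fin 2)), FreeGroup.of 1⁆ ∉ fatCommutator (wuLetter 2) := by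
  intro hmem
  let f : FreeGroup (Fin 2) →* Heisenberg := FreeGroup.lift ![⟨1, 0, 0⟩, ⟨0, 1, 0⟩]
  have hker := fatCommutator_le_ker (by simp) (wuLetter 2) f
    Heisenberg.commutatorElement_commutatorElement hmem
  rw [MonoidHom.mem_ker, map_commutatorElement, FreeGroup.lift_apply_of,
    FreeGroup.lift_apply_of, Heisenberg.commutatorElement_eq, Heisenberg.one_def] at hker
  simp at hker
end

section
/- (Akbulut–Kirby presentations of the trivial group.) Let F be the free group on two generators x₁, x₂. For every n ≥ 2, the quotient of F by the normal closure of the set {x₁ⁿx₂^{-(n+1)}, x₁x₂x₁x₂⁻¹x₁⁻¹x₂⁻¹} is the trivial group; equivalently, the normal closure of {x₁ⁿx₂^{-(n+1)}, x₁x₂x₁x₂⁻¹x₁⁻¹x₂⁻¹} in F is all of F. -/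
/-- Akbulut–Kirby presentations of the trivial group: let `F` be the free
group on two generators `x₁, x₂`.  For every `n ≥ 2` the normal closure of
`{x₁ⁿx₂^{-(n+1)}, x₁x₂x₁x₂⁻¹x₁⁻¹x₂⁻¹}` in `F` is all of `F`; equivalently, the
presentation `⟨x₁, x₂ | x₁ⁿx₂^{-(n+1)}, x₁x₂x₁x₂⁻¹x₁⁻¹x₂⁻¹⟩` defines the trivial group. -/
theorem akbulut_kirby_trivial (n : ℕ) (hn : 2 ≤ n) :
    Subgroup.normalClosure
      ({(FreeGroup.of 0 : FreeGroup (Fin 2)) ^ n * ((FreeGroup.of 1) ^ (n + 1))⁻¹,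
        FreeGroup.of 0 * FreeGroup.of 1 * FreeGroup.of 0 * (FreeGroup.of 1)⁻¹ *
          (FreeGroup.of 0)⁻¹ * (FreeGroup.of 1)⁻¹} : Set (FreeGroup (Fin 2))) = ⊤ := by
  set N : Subgroup (FreeGroup (Fin 2)) := Subgroup.normalClosure _ with hN
  have hnormal : N.Normal := Subgroup.normalClosure_normal
  set x : FreeGroup (Fin 2) ⧸ N := (QuotientGroup.mk (FreeGroup.of 0) : FreeGroup (Fin 2) ⧸ N)
    with hx
  set y : FreeGroup (Fin 2) ⧸ N := (QuotientGroup.mk (FreeGroup.of 1) : FreeGroup (Fin 2) ⧸ N)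
    with hy
  -- the two relators are trivial in the quotient
  have hr1 : x ^ n * (y ^ (n + 1))⁻¹ = 1 := by
    have h : ((FreeGroup.of 0 : FreeGroup (Fin 2)) ^ n * ((FreeGroup.of 1) ^ (n + 1))⁻¹) ∈ N :=
      Subgroup.subset_normalClosure (by left; rfl)
    have := (QuotientGroup.eq_one_iff _).mpr h
    simpa [hx, hy] using this
  have hr2 : x * y * x * y⁻¹ * x⁻¹ * y⁻¹ = 1 := by
    have h : (FreeGroup.of 0 * FreeGroup.of 1 * FreeGroup.of 0 * (FreeGroup.of 1)⁻¹ *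
        (FreeGroup.of 0)⁻¹ * (FreeGroup.of 1)⁻¹ : FreeGroup (Fin 2)) ∈ N :=
      Subgroup.subset_normalClosure (by right; rfl)
    have := (QuotientGroup.eq_one_iff _).mpr h
    simpa [hx, hy] using this
  have h1 : x ^ n = y ^ (n + 1) := by
    have := mul_eq_one_iff_eq_inv.mp hr1
    simpa using this
  have h2 : x * y * x = y * x * y := by
    have : x * y * x * y⁻¹ * x⁻¹ = y := by
      have := mul_eq_one_iff_eq_inv.mp hr2
      simpa using this
    calc x * y * x = (x * y * x * y⁻¹ * x⁻¹) * (x * y) := by group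
    _ = y * (x * y) := by rw [this]
    _ = y * x * y := by group
  -- x^n commutes with everything we need
  have cx : Commute x (x ^ n) := (Commute.refl x).pow_right n
  have cy : Commute y (x ^ n) := by rw [h1]; exact (Commute.refl y).pow_right (n + 1)
  have cxy : Commute (x * y) (x ^ n) := cx.mul_left cy
  -- y is the conjugate of x by x*y
  have hconj : (x * y) * x * (x * y)⁻¹ = y := by
    have : (x * y) * x = y * (x * y) := by
      calc (x * y) * x = x * y * x := by group
      _ = y * x * y := h2
      _ = y * (x * y) := by group
    rw [this]; group
  -- hence y^(n+1) = y * x^n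
  have key : y ^ (n + 1) = y * x ^ n := by
    calc y ^ (n + 1) = ((x * y) * x * (x * y)⁻¹) ^ (n + 1) := by rw [hconj]
    _ = (x * y) * x ^ (n + 1) * (x * y)⁻¹ := conj_pow
    _ = (x * y) * x * (x ^ n * (x * y)⁻¹) := by rw [pow_succ']; group
    _ = (x * y) * x * ((x * y)⁻¹ * x ^ n) := by rw [cxy.inv_left.eq]
    _ = ((x * y) * x * (x * y)⁻¹) * x ^ n := by group
    _ = y * x ^ n := by rw [hconj]
  have hy1 : y = 1 := by
    have : x ^ n = y * x ^ n := h1.trans key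
    have := this.symm.trans (one_mul (x ^ n)).symm
    exact mul_right_cancel this
  have hx1 : x = 1 := by
    have : x * x = x * 1 := by
      have := h2
      rw [hy1] at this
      simpa using this.symm
    exact mul_left_cancel this
  -- conclude
  have h0N : (FreeGroup.of 0 : FreeGroup (Fin 2)) ∈ N :=
    (QuotientGroup.eq_one_iff _).mp hx1
  have h1N : (FreeGroup.of 1 : FreeGroup (Fin 2)) ∈ N :=
    (QuotientGroup.eq_one_iff _).mp hy1
  rw [eq_top_iff, ← FreeGroup.closure_range_of (Fin 2), Subgroup.closure_le]
  rintro _ ⟨i, rfl⟩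
  fin_cases i
  · exact h0N
  · exact h1N
end

section
/- Let H be a group, G = H ∗ H the free product of two copies of H, and let λ, μ, ν : H ∗ H → H be respectively the first projection, the second projection, and the multiplication (fold) homomorphism. Set L = ker λ, M = ker μ, N = ker ν. Then L ∩ M = [L, M], L ∩ N = [L, N], and M ∩ N = [M, N]. -/
/-!
Since `A ⊓ B` is the kernel of `G → G ⧸ A × G ⧸ B`, it lies in `⁅A, B⁆` as soon as the quotient map
`G → G ⧸ ⁅A, B⁆` factors through that map; in `G ⧸ ⁅A, B⁆` the images of `A` and `B` commute,
which is what makes the factorizations homomorphisms. For `L, M` the two factors are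
induced by `i₁` and `i₂`. For `L, N` they are `a ↦ i₁ a * (i₂ a)⁻¹` and `i₂`: the first is
multiplicative modulo `⁅L, N⁆` because `i₂ a ∈ L` commutes there with `i₁ b * (i₂ b)⁻¹ ∈ N`.
The case `M, N` is the image of `L, N` under the swap automorphism of `H ∗ H`.
-/

open scoped Monoid.Coprod

section Commutator

variable {G : Type*} [Group G]

theorem QuotientGroup.commute_mk_of_mem {A B : Subgroup G} [A.Normal] [B.Normal]
    {x y : G} (hx : x ∈ A) (hy : y ∈ B) :
    Commute (x : G ⧸ ⁅A, B⁆) (y : G ⧸ ⁅A, B⁆) := by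
  rw [← commutatorElement_eq_one_iff_commute, ← QuotientGroup.mk'_apply, ← QuotientGroup.mk'_apply,
    ← map_commutatorElement, QuotientGroup.mk'_apply, QuotientGroup.eq_one_iff]
  exact Subgroup.commutator_mem_commutator hx hy

theorem MonoidHom.ker_inf_ker_eq_commutator {K₁ K₂ : Type*} [MulOneClass K₁] [MulOneClass K₂]
    (α : G →* K₁) (β : G →* K₂) (u : K₁ × K₂ →* G ⧸ ⁅α.ker, β.ker⁆)
    (hu : u.comp (α.prod β) = QuotientGroup.mk' _) :
    α.ker ⊓ β.ker = ⁅α.ker, β.ker⁆ := by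
  refine le_antisymm (fun g hg => ?_) (Subgroup.commutator_le_inf _ _)
  rw [← MonoidHom.ker_prod, MonoidHom.mem_ker] at hg
  rw [← QuotientGroup.ker_mk' ⁅α.ker, β.ker⁆, ← hu, MonoidHom.mem_ker, MonoidHom.comp_apply, hg,
    map_one]

end Commutator

@[simps]
def MonoidHom.mulInvOfCommute {H Q : Type*} [MulOneClass H] [Group Q] (p q : H →* Q)
    (h : ∀ a b, Commute (q a) (p b * (q b)⁻¹)) : H →* Q where
  toFun a := p a * (q a)⁻¹
  map_one' := by simp
  map_mul' a b :=
    calc p (a * b) * (q (a * b))⁻¹ = p a * ((p b * (q b)⁻¹) * (q a)⁻¹) := by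
          simp only [map_mul, mul_inv_rev, mul_assoc]
      _ = p a * (q a)⁻¹ * (p b * (q b)⁻¹) := by
          rw [← (h a b).inv_left.eq, mul_assoc]

namespace Monoid.Coprod

def fold (H : Type*) [Monoid H] : H ∗ H →* H := lift (.id H) (.id H)

@[simp]
theorem fold_apply_inl {H : Type*} [Monoid H] (a : H) : fold H (inl a) = a := rfl

@[simp]
theorem fold_apply_inr {H : Type*} [Monoid H] (a : H) : fold H (inr a) = a := rfl

theorem ker_fst_inf_ker_snd (H₁ H₂ : Type*) [Group H₁] [Group H₂] :
    (fst : H₁ ∗ H₂ →* H₁).ker ⊓ (snd : H₁ ∗ H₂ →* H₂).ker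
      = ⁅(fst : H₁ ∗ H₂ →* H₁).ker, (snd : H₁ ∗ H₂ →* H₂).ker⁆ := by
  let π := QuotientGroup.mk' ⁅(fst : H₁ ∗ H₂ →* H₁).ker, (snd : H₁ ∗ H₂ →* H₂).ker⁆
  have hinr (b : H₂) : inr b ∈ (fst : H₁ ∗ H₂ →* H₁).ker := by simp
  have hinl (a : H₁) : inl a ∈ (snd : H₁ ∗ H₂ →* H₂).ker := by simp
  refine MonoidHom.ker_inf_ker_eq_commutator _ _
    ((π.comp inl).noncommCoprod (π.comp inr) fun a b => by
      simpa [π] using (QuotientGroup.commute_mk_of_mem (hinr b) (hinl a)).symm) ?_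
  refine hom_ext ?_ ?_ <;> ext x <;> simp [π]

theorem ker_fst_inf_ker_fold (H : Type*) [Group H] :
    (fst : H ∗ H →* H).ker ⊓ (fold H).ker = ⁅(fst : H ∗ H →* H).ker, (fold H).ker⁆ := by
  let π := QuotientGroup.mk' ⁅(fst : H ∗ H →* H).ker, (fold H).ker⁆
  have hinr (a : H) : inr a ∈ (fst : H ∗ H →* H).ker := by simp
  have hdiff (a : H) : inl a * (inr a)⁻¹ ∈ (fold H).ker := by simp
  let s := (π.comp inl).mulInvOfCommute (π.comp inr) fun a b => by
    simpa [π] using QuotientGroup.commute_mk_of_mem (hinr a) (hdiff b)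
  refine MonoidHom.ker_inf_ker_eq_commutator _ _
    (s.noncommCoprod (π.comp inr) fun a b => by
      simpa [s, π] using (QuotientGroup.commute_mk_of_mem (hinr b) (hdiff a)).symm) ?_
  refine hom_ext ?_ ?_ <;> ext x <;> simp [s, π]

theorem map_swap_ker {M N P : Type*} [Group M] [Group N] [MulOneClass P] (f : N ∗ M →* P) :
    f.ker.map (swap N M) = (f.comp (swap M N)).ker := by
  ext x
  constructor
  · rintro ⟨y, hy, rfl⟩
    simpa using hy
  · exact fun hx => ⟨swap M N x, hx, swap_swap x⟩

theorem ker_snd_inf_ker_fold (H : Type*) [Group H] :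
    (snd : H ∗ H →* H).ker ⊓ (fold H).ker = ⁅(snd : H ∗ H →* H).ker, (fold H).ker⁆ := by
  have h := congrArg (Subgroup.map (swap H H)) (ker_fst_inf_ker_fold H)
  rwa [Subgroup.map_inf _ _ _ swap_injective, Subgroup.map_commutator, map_swap_ker,
    map_swap_ker, fst_comp_swap, fold, lift_comp_swap] at h

end Monoid.Coprod

/-- let `H` be a group, `G = H ∗ H` the free product of two copies of `H`,
and let `λ, μ, ν : H ∗ H → H` be the first projection, the second projection and the
multiplication (fold) homomorphism.  With `L = ker λ`, `M = ker μ`, `N = ker ν` we have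
`L ∩ M = [L, M]`, `L ∩ N = [L, N]` and `M ∩ N = [M, N]`. -/
theorem freeProduct_kernel_inf_eq_commutator (H : Type*) [Group H]
    (lam mu nu : (H ∗ H) →* H)
    (hlam : lam = Monoid.Coprod.lift (MonoidHom.id H) 1)
    (hmu : mu = Monoid.Coprod.lift 1 (MonoidHom.id H))
    (hnu : nu = Monoid.Coprod.lift (MonoidHom.id H) (MonoidHom.id H))
    (L M N : Subgroup (H ∗ H))
    (hL : L = lam.ker) (hM : M = mu.ker) (hN : N = nu.ker) :
    L ⊓ M = ⁅L, M⁆ ∧ L ⊓ N = ⁅L, N⁆ ∧ M ⊓ N = ⁅M, N⁆ := by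
  subst hlam hmu hnu hL hM hN
  exact ⟨Monoid.Coprod.ker_fst_inf_ker_snd H H, Monoid.Coprod.ker_fst_inf_ker_fold H,
    Monoid.Coprod.ker_snd_inf_ker_fold H⟩
end

section
/- Let G be a group with normal subgroups L = N₁, M = N₂, N = N₃, and for nonempty A ⊆ {1,2,3} write N_A = ⋂_{i∈A} Nᵢ. Let T(L,M,N) be the group presented by generators a ⊗_{A,B} b, for all pairs (A,B) of nonempty disjoint subsets with A ∪ B = {1,2,3}, a ∈ N_A, b ∈ N_B, subject to the relations: (i) a ⊗_{A,B} b = (b ⊗_{B,A} a)⁻¹; (ii) aa' ⊗_{A,B} b = (ᵃa' ⊗_{A,B} ᵃb)(a ⊗_{A,B} b); (iii) (ᵘ[u⁻¹,v] ⊗_{U∪V,W} ᵘw)(ʷ[w⁻¹,u] ⊗_{W∪U,V} ʷv)(ᵛ[v⁻¹,w] ⊗_{V∪W,U} ᵛu) = 1 for all pairwise disjoint nonempty U,V,W with U∪V∪W = {1,2,3}, u ∈ N_U, v ∈ N_V, w ∈ N_W; (iv) (a ⊗_{A,B} b)(a' ⊗_{A',B'} b')(a ⊗_{A,B} b)⁻¹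 = ^{[a,b]}a' ⊗_{A',B'} ^{[a,b]}b'. Then there is a well-defined group homomorphism ∂ : T(L,M,N) → G sending each generator a ⊗_{A,B} b to the commutator [a,b] = aba⁻¹b⁻¹; that is, the assignment a ⊗_{A,B} b ↦ [a,b] respects all the defining relations of T(L,M,N). -/
open scoped commutatorElement

/-- The generating symbols `a ⊗_{A,B} b` of the group `T(L,M,N)` attached to a triple
`N₁, N₂, N₃` of normal subgroups of `G` (given as a function `N : Fin 3 → Subgroup G`):
a generator is a tuple `(A, B, a, b)` where `A, B` are nonempty disjoint subsets of
`{0,1,2}` with `A ∪ B = {0,1,2}`, `a ∈ N_A = ⋂_{i∈A} Nᵢ` and `b ∈ N_B = ⋂_{i∈B} Nᵢ`. -/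
def TGen {G : Type*} [Group G] (N : Fin 3 → Subgroup G) : Type _ :=
  { p : Set (Fin 3) × Set (Fin 3) × G × G //
      p.1.Nonempty ∧ p.2.1.Nonempty ∧ Disjoint p.1 p.2.1 ∧ p.1 ∪ p.2.1 = Set.univ ∧
      p.2.2.1 ∈ ⨅ i ∈ p.1, N i ∧ p.2.2.2 ∈ ⨅ i ∈ p.2.1, N i }

namespace TGen

variable {G : Type*} [Group G] {N : Fin 3 → Subgroup G}

/-- The first index set `A` of a generator `a ⊗_{A,B} b`. -/
def A (g : TGen N) : Set (Fin 3) := g.val.1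

/-- The second index set `B` of a generator `a ⊗_{A,B} b`. -/
def B (g : TGen N) : Set (Fin 3) := g.val.2.1

/-- The first entry `a` of a generator `a ⊗_{A,B} b`. -/
def a (g : TGen N) : G := g.val.2.2.1

/-- The second entry `b` of a generator `a ⊗_{A,B} b`. -/
def b (g : TGen N) : G := g.val.2.2.2

end TGen

/-- The defining relations of the group `T(L,M,N)`, as a subset of the free group on the
generating symbols (each relation `u = v` is recorded as the word `u * v⁻¹`):
(i)   `a ⊗_{A,B} b = (b ⊗_{B,A} a)⁻¹`;
(ii)  `aa' ⊗_{A,B} b = (ᵃa' ⊗_{A,B} ᵃb)(a ⊗_{A,B} b)`;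
(iii) `(ᵘ[u⁻¹,v] ⊗_{U∪V,W} ᵘw)(ʷ[w⁻¹,u] ⊗_{W∪U,V} ʷv)(ᵛ[v⁻¹,w] ⊗_{V∪W,U} ᵛu) = 1`;
(iv)  `(a ⊗_{A,B} b)(a' ⊗_{A',B'} b')(a ⊗_{A,B} b)⁻¹ = ^{[a,b]}a' ⊗_{A',B'} ^{[a,b]}b'`.
Here `[x,y] = xyx⁻¹y⁻¹` and `ˣy = xyx⁻¹`. -/
def TRels {G : Type*} [Group G] (N : Fin 3 → Subgroup G) : Set (FreeGroup (TGen N)) :=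
  { r |
    (∃ g g' : TGen N, g'.val = (g.B, g.A, g.b, g.a) ∧
      r = FreeGroup.of g * FreeGroup.of g') ∨
    (∃ (g₁ g₂ g₃ : TGen N) (A B : Set (Fin 3)) (a a' b : G),
      a' ∈ ⨅ i ∈ A, N i ∧
      g₁.val = (A, B, a * a', b) ∧
      g₂.val = (A, B, a * a' * a⁻¹, a * b * a⁻¹) ∧
      g₃.val = (A, B, a, b) ∧
      r = FreeGroup.of g₁ * (FreeGroup.of g₂ * FreeGroup.of g₃)⁻¹) ∨
    (∃ (g₁ g₂ g₃ : TGen N) (U V W : Set (Fin 3)) (u v w : G),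
      U.Nonempty ∧ V.Nonempty ∧ W.Nonempty ∧
      Disjoint U V ∧ Disjoint V W ∧ Disjoint U W ∧ U ∪ V ∪ W = Set.univ ∧
      u ∈ ⨅ i ∈ U, N i ∧ v ∈ ⨅ i ∈ V, N i ∧ w ∈ ⨅ i ∈ W, N i ∧
      g₁.val = (U ∪ V, W, u * ⁅u⁻¹, v⁆ * u⁻¹, u * w * u⁻¹) ∧
      g₂.val = (W ∪ U, V, w * ⁅w⁻¹, u⁆ * w⁻¹, w * v * w⁻¹) ∧
      g₃.val = (V ∪ W, U, v * ⁅v⁻¹, w⁆ * v⁻¹, v * u * v⁻¹) ∧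
      r = FreeGroup.of g₁ * FreeGroup.of g₂ * FreeGroup.of g₃) ∨
    (∃ g g' g'' : TGen N,
      g''.val = (g'.A, g'.B, ⁅g.a, g.b⁆ * g'.a * ⁅g.a, g.b⁆⁻¹,
        ⁅g.a, g.b⁆ * g'.b * ⁅g.a, g.b⁆⁻¹) ∧
      r = FreeGroup.of g * FreeGroup.of g' * (FreeGroup.of g)⁻¹ * (FreeGroup.of g'')⁻¹) }

/-- The group `T(L,M,N)` presented by the generators `a ⊗_{A,B} b` and the relations
(i)–(iv) above. -/
abbrev TGroup {G : Type*} [Group G] (N : Fin 3 → Subgroup G) : Type _ :=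
  PresentedGroup (TRels N)

/-!
Each defining relation of `T(L,M,N)` is sent by `a ⊗_{A,B} b ↦ [a,b]` to a commutator identity
valid in every group: (i) is `[a,b][b,a] = 1`, (ii) is the expansion of `[aa',b]`, (iii) is the
Hall–Witt identity (note `ᵘ[u⁻¹,v] = [v,u]`), and (iv) says that conjugation by `[a,b]` is a group
homomorphism. So the relations hold in `G` and the presentation gives `∂`.
-/

section CommutatorIdentities

variable {G : Type*} [Group G]

theorem conj_commutatorElement_inv_left (u v : G) : u * ⁅u⁻¹, v⁆ * u⁻¹ = ⁅v, u⁆ := by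
  rw [commutatorElement_inv_left]
  group

theorem commutatorElement_mul_left_eq_conj_mul_conj (a a' b : G) :
    ⁅a * a', b⁆ = ⁅a * a' * a⁻¹, a * b * a⁻¹⁆ * ⁅a, b⁆ := by
  rw [← conjugate_commutatorElement, commutatorElement_mul_left_eq_conj_mul]

theorem conj_commutatorElement_inv_left_commutatorElement_mul (u v w : G) :
    ⁅u * ⁅u⁻¹, v⁆ * u⁻¹, u * w * u⁻¹⁆ * ⁅w * ⁅w⁻¹, u⁆ * w⁻¹, w * v * w⁻¹⁆ *
      ⁅v * ⁅v⁻¹, w⁆ * v⁻¹, v * u * v⁻¹⁆ = 1 := by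
  simp only [conj_commutatorElement_inv_left]
  exact commutatorElement_commutatorElement_conj_mul v u w

end CommutatorIdentities

theorem TGen.commutatorElement_eq_of_val_eq {G : Type*} [Group G] {N : Fin 3 → Subgroup G}
    {g : TGen N} {A B : Set (Fin 3)} {a b : G} (h : g.val = (A, B, a, b)) :
    ⁅g.a, g.b⁆ = ⁅a, b⁆ := by
  rw [TGen.a, TGen.b, h]

theorem lift_commutatorElement_eq_one_of_mem_TRels {G : Type*} [Group G]
    {N : Fin 3 → Subgroup G} {r : FreeGroup (TGen N)} (hr : r ∈ TRels N) :
    FreeGroup.lift (fun g : TGen N => ⁅g.a, g.b⁆) r = 1 := by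
  rcases hr with ⟨g, g', hg', rfl⟩ | ⟨g₁, g₂, g₃, A, B, a, a', b, -, h₁, h₂, h₃, rfl⟩ |
    ⟨g₁, g₂, g₃, U, V, W, u, v, w, -, -, -, -, -, -, -, -, -, -, h₁, h₂, h₃, rfl⟩ |
    ⟨g, g', g'', hg'', rfl⟩
  · simp only [map_mul, FreeGroup.lift_apply_of, TGen.commutatorElement_eq_of_val_eq hg']
    rw [← commutatorElement_inv (g₁ := g.a), mul_inv_cancel]
  · simp only [map_mul, map_inv, FreeGroup.lift_apply_of,
      TGen.commutatorElement_eq_of_val_eq h₁, TGen.commutatorElement_eq_of_val_eq h₂,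
      TGen.commutatorElement_eq_of_val_eq h₃]
    rw [commutatorElement_mul_left_eq_conj_mul_conj, mul_inv_cancel]
  · simp only [map_mul, FreeGroup.lift_apply_of, TGen.commutatorElement_eq_of_val_eq h₁,
      TGen.commutatorElement_eq_of_val_eq h₂, TGen.commutatorElement_eq_of_val_eq h₃]
    exact conj_commutatorElement_inv_left_commutatorElement_mul u v w
  · simp only [map_mul, map_inv, FreeGroup.lift_apply_of,
      TGen.commutatorElement_eq_of_val_eq hg'']
    rw [conjugate_commutatorElement, mul_inv_cancel]

theorem exists_commutator_hom_general {G : Type*} [Group G] (L M N : Subgroup G) :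
    ∃ d : TGroup (![L, M, N]) →* G,
      ∀ g : TGen (![L, M, N]), d (PresentedGroup.of g) = ⁅g.a, g.b⁆ :=
  ⟨PresentedGroup.toGroup fun _ ↦ lift_commutatorElement_eq_one_of_mem_TRels,
    fun _ ↦ PresentedGroup.toGroup.of _⟩

/-- for a group `G` with normal subgroups `L = N₁`, `M = N₂`, `N = N₃`,
the assignment `a ⊗_{A,B} b ↦ [a,b] = aba⁻¹b⁻¹` respects all defining relations of
`T(L,M,N)`, i.e. there is a well-defined group homomorphism `∂ : T(L,M,N) → G` sending
each generator `a ⊗_{A,B} b` to the commutator `[a,b]`. -/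
theorem exists_commutator_hom {G : Type*} [Group G] (L M N : Subgroup G)
    [L.Normal] [M.Normal] [N.Normal] :
    ∃ d : TGroup (![L, M, N]) →* G,
      ∀ g : TGen (![L, M, N]), d (PresentedGroup.of g) = ⁅g.a, g.b⁆ :=
  exists_commutator_hom_general L M N
end
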